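/- arXiv:2405.03895 — 2 statements merged into one kernel-verified Lean document; each statement's English description precedes it below -/
import Mathlib

section
/- Let R be a Kähler-type curvature tensor on an n-dimensional complex inner product space V, a, b ∈ ℝ, let Σ ⊆ V be a complex subspace of dimension k with unitary basis {e_1,…,e_k}, and let Ric_Σ(X,X̄) := Σ_{j=1}^k R(X,X̄,e_j,ē_j) denote the intrinsic Ricci curvature of Σ. Suppose the mixed curvature of Σ, C^Σ_{a,b}(X) := (a/|X|²)·Ric_Σ(X,X̄) + b·R(X,X̄,X,X̄)/|X|⁴, satisfies C^Σ_{a,b}(X) ≥ c for all nonzero X ∈ Σ. Then (a/k + 2b/(k(k+1)))·S_Σ ≥ c, where S_Σ := Σ_{i,j=1}^k R(e_i,ē_i,e_j,ē_j). -/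
structure IsKahlerCurvature {V : Type*} [AddCommGroup V] [Module ℂ V]
    (R : V → V → V → V → ℂ) : Prop where
  linear_fst : ∀ Y Z W, IsLinearMap ℂ fun X => R X Y Z W
  conjLinear_snd : ∀ X Z W (c : ℂ) (Y₁ Y₂ : V),
    R X (c • Y₁ + Y₂) Z W = starRingEnd ℂ c * R X Y₁ Z W + R X Y₂ Z W
  conj_symm : ∀ X Y Z W, R X Y Z W = starRingEnd ℂ (R Y X W Z)
  symm_fst_trd : ∀ X Y Z W, R X Y Z W = R Z Y X W
  symm_snd_fourth : ∀ X Y Z W, R X Y Z W = R X W Z Y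


open Complex Finset

section Aux
variable {V : Type*} [AddCommGroup V] [Module ℂ V] {R : V → V → V → V → ℂ}
variable {ι : Type*} [Fintype ι]

lemma kc_sum_fst (hR : IsKahlerCurvature R) (f : ι → ℂ) (w : ι → V) (Y Z W : V) :
    R (∑ l, f l • w l) Y Z W = ∑ l, f l * R (w l) Y Z W := by
  let L : V →ₗ[ℂ] ℂ := IsLinearMap.mk' _ (hR.linear_fst Y Z W)
  have hL : ∀ x, R x Y Z W = L x := fun _ => rfl
  simp_rw [hL, map_sum, map_smul, smul_eq_mul]

lemma kc_sum_snd (hR : IsKahlerCurvature R) (f : ι → ℂ) (w : ι → V) (X Z W : V) :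
    R X (∑ l, f l • w l) Z W = ∑ l, starRingEnd ℂ (f l) * R X (w l) Z W := by
  have hadd : ∀ Y₁ Y₂ : V, R X (Y₁ + Y₂) Z W = R X Y₁ Z W + R X Y₂ Z W := by
    intro Y₁ Y₂
    have := hR.conjLinear_snd X Z W 1 Y₁ Y₂
    simpa using this
  have h0 : R X 0 Z W = 0 := by
    have h := hadd 0 0
    rw [add_zero] at h
    linear_combination -h
  have hsmul : ∀ (cc : ℂ) (Y : V), R X (cc • Y) Z W = starRingEnd ℂ cc * R X Y Z W := by
    intro cc Y
    have := hR.conjLinear_snd X Z W cc Y 0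
    simpa [h0] using this
  let L : V →ₗ[ℂ] ℂ := IsLinearMap.mk' (fun Y => starRingEnd ℂ (R X Y Z W))
    ⟨fun Y₁ Y₂ => by simp [hadd], fun cc Y => by simp [hsmul, map_mul, smul_eq_mul]⟩
  have hL : ∀ Y, R X Y Z W = starRingEnd ℂ (L Y) := fun Y => by simp [L, IsLinearMap.mk']
  rw [hL, map_sum, map_sum]
  refine Finset.sum_congr rfl fun l _ => ?_
  rw [map_smul, smul_eq_mul, map_mul]
  simp [L, IsLinearMap.mk']

lemma kc_sum_trd (hR : IsKahlerCurvature R) (f : ι → ℂ) (w : ι → V) (X Y W : V) :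
    R X Y (∑ l, f l • w l) W = ∑ l, f l * R X Y (w l) W := by
  rw [hR.symm_fst_trd, kc_sum_fst hR]
  exact Finset.sum_congr rfl fun l _ => by rw [← hR.symm_fst_trd]

lemma kc_sum_fourth (hR : IsKahlerCurvature R) (f : ι → ℂ) (w : ι → V) (X Y Z : V) :
    R X Y Z (∑ l, f l • w l) = ∑ l, starRingEnd ℂ (f l) * R X Y Z (w l) := by
  rw [hR.symm_snd_fourth, kc_sum_snd hR]
  exact Finset.sum_congr rfl fun l _ => by rw [← hR.symm_snd_fourth]

lemma kc_expand2 (hR : IsKahlerCurvature R) (f : ι → ℂ) (w : ι → V) (Z W : V) :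
    R (∑ l, f l • w l) (∑ l, f l • w l) Z W
      = ∑ p, ∑ q, f p * starRingEnd ℂ (f q) * R (w p) (w q) Z W := by
  rw [kc_sum_fst hR]
  refine Finset.sum_congr rfl fun p _ => ?_
  rw [kc_sum_snd hR, Finset.mul_sum]
  exact Finset.sum_congr rfl fun q _ => by ring

lemma kc_expand4 (hR : IsKahlerCurvature R) (f : ι → ℂ) (w : ι → V) :
    R (∑ l, f l • w l) (∑ l, f l • w l) (∑ l, f l • w l) (∑ l, f l • w l)
      = ∑ p, ∑ q, ∑ r, ∑ s,
          f p * starRingEnd ℂ (f q) * f r * starRingEnd ℂ (f s)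
            * R (w p) (w q) (w r) (w s) := by
  rw [kc_expand2 hR]
  refine Finset.sum_congr rfl fun p _ => Finset.sum_congr rfl fun q _ => ?_
  rw [kc_sum_trd hR, Finset.mul_sum]
  refine Finset.sum_congr rfl fun r _ => ?_
  rw [kc_sum_fourth hR]
  simp_rw [Finset.mul_sum]
  exact Finset.sum_congr rfl fun s _ => by ring

end Aux

noncomputable def uphase : Fin 4 → ℂ := fun t => Complex.I ^ (t : ℕ)

lemma uphase_mul_conj (t : Fin 4) : uphase t * starRingEnd ℂ (uphase t) = 1 := by
  rw [uphase, map_pow, Complex.conj_I, ← mul_pow]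
  simp

lemma uphase_sum_pow (m n : ℕ) (hm : m ≤ 2) (hn : n ≤ 2) :
    ∑ t : Fin 4, uphase t ^ m * starRingEnd ℂ (uphase t) ^ n
      = if m = n then 4 else 0 := by
  simp only [uphase, map_pow, Complex.conj_I, Fin.sum_univ_four,
    show ((0:Fin 4):ℕ) = 0 from rfl, show ((1:Fin 4):ℕ) = 1 from rfl,
    show ((2:Fin 4):ℕ) = 2 from rfl, show ((3:Fin 4):ℕ) = 3 from rfl]
  interval_cases m <;> interval_cases n <;> norm_num [pow_succ, Complex.I_mul_I]

section Char
variable {k : ℕ}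

/-- count of `l` among `{a, b}` -/
def cnt (a b l : Fin k) : ℕ := (if a = l then 1 else 0) + (if b = l then 1 else 0)

lemma cnt_le_two (a b l : Fin k) : cnt a b l ≤ 2 := by
  unfold cnt; split_ifs <;> norm_num

lemma cnt_eq_iff (p q r s : Fin k) :
    (∀ l, cnt p r l = cnt q s l) ↔ (p = q ∧ r = s) ∨ (p = s ∧ r = q) := by
  constructor
  · intro h
    by_cases hq : q = p
    · subst hq
      left
      refine ⟨rfl, ?_⟩
      have := h r
      unfold cnt at this
      split_ifs at this <;> omega
    · have hp := h p
      unfold cnt at hp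
      have hs : s = p := by by_contra hs; split_ifs at hp <;> simp_all
      subst hs
      right
      refine ⟨rfl, ?_⟩
      have := h r
      unfold cnt at this
      split_ifs at this <;> omega
  · rintro (⟨rfl, rfl⟩ | ⟨rfl, rfl⟩) <;> intro l <;> unfold cnt <;> omega

lemma charSum4 (p q r s : Fin k) :
    ∑ σ : Fin k → Fin 4,
        uphase (σ p) * starRingEnd ℂ (uphase (σ q)) * uphase (σ r)
          * starRingEnd ℂ (uphase (σ s))
      = if (p = q ∧ r = s) ∨ (p = s ∧ r = q) then (4:ℂ)^k else 0 := by
  classical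
  have step1 : ∀ σ : Fin k → Fin 4,
      uphase (σ p) * starRingEnd ℂ (uphase (σ q)) * uphase (σ r)
        * starRingEnd ℂ (uphase (σ s))
      = ∏ l, (uphase (σ l) ^ cnt p r l * starRingEnd ℂ (uphase (σ l)) ^ cnt q s l) := by
    intro σ
    simp only [cnt, pow_add, Finset.prod_mul_distrib, pow_ite, pow_one, pow_zero,
      Finset.prod_ite_eq, Finset.mem_univ, if_true]
    ring
  calc ∑ σ : Fin k → Fin 4, uphase (σ p) * starRingEnd ℂ (uphase (σ q)) * uphase (σ r)
          * starRingEnd ℂ (uphase (σ s))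
      = ∑ σ ∈ Fintype.piFinset (fun _ : Fin k => (univ : Finset (Fin 4))),
          ∏ l, (uphase (σ l) ^ cnt p r l * starRingEnd ℂ (uphase (σ l)) ^ cnt q s l) := by
        rw [Fintype.piFinset_univ]; exact Finset.sum_congr rfl fun σ _ => step1 σ
    _ = ∏ l, ∑ t : Fin 4, uphase t ^ cnt p r l * starRingEnd ℂ (uphase t) ^ cnt q s l := by
        rw [Finset.prod_univ_sum]
    _ = ∏ l, if cnt p r l = cnt q s l then (4:ℂ) else 0 :=
        Finset.prod_congr rfl fun l _ =>
          uphase_sum_pow _ _ (cnt_le_two p r l) (cnt_le_two q s l)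
    _ = if (p = q ∧ r = s) ∨ (p = s ∧ r = q) then (4:ℂ)^k else 0 := by
        by_cases hbal : (p = q ∧ r = s) ∨ (p = s ∧ r = q)
        · rw [if_pos hbal]
          have hall := (cnt_eq_iff p q r s).mpr hbal
          calc ∏ l, (if cnt p r l = cnt q s l then (4:ℂ) else 0)
              = ∏ _l : Fin k, (4:ℂ) := Finset.prod_congr rfl fun l _ => if_pos (hall l)
            _ = (4:ℂ)^k := by simp
        · rw [if_neg hbal]
          obtain ⟨l, hl⟩ : ∃ l, cnt p r l ≠ cnt q s l := by
            by_contra hco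
            push_neg at hco
            exact hbal ((cnt_eq_iff p q r s).mp hco)
          exact Finset.prod_eq_zero (Finset.mem_univ l) (if_neg hl)

lemma charSum2 (hk : 1 ≤ k) (p q : Fin k) :
    ∑ σ : Fin k → Fin 4, uphase (σ p) * starRingEnd ℂ (uphase (σ q))
      = if p = q then (4:ℂ)^k else 0 := by
  classical
  set l0 : Fin k := ⟨0, hk⟩
  have h1 : ∀ σ : Fin k → Fin 4,
      uphase (σ p) * starRingEnd ℂ (uphase (σ q))
        = uphase (σ p) * starRingEnd ℂ (uphase (σ q)) * uphase (σ l0)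
            * starRingEnd ℂ (uphase (σ l0)) := by
    intro σ
    rw [mul_assoc, uphase_mul_conj, mul_one]
  calc ∑ σ : Fin k → Fin 4, uphase (σ p) * starRingEnd ℂ (uphase (σ q))
      = ∑ σ : Fin k → Fin 4, uphase (σ p) * starRingEnd ℂ (uphase (σ q)) * uphase (σ l0)
          * starRingEnd ℂ (uphase (σ l0)) := Finset.sum_congr rfl fun σ _ => h1 σ
    _ = if (p = q ∧ l0 = l0) ∨ (p = l0 ∧ l0 = q) then (4:ℂ)^k else 0 := charSum4 p q l0 l0
    _ = if p = q then (4:ℂ)^k else 0 := by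
        refine if_congr ?_ rfl rfl
        constructor
        · rintro (⟨h, -⟩ | ⟨h1', h2'⟩)
          · exact h
          · exact h1'.trans h2'
        · intro h; exact Or.inl ⟨h, rfl⟩

lemma sum_if_pull {α : Type*} (s : Finset α) (P : Prop) [Decidable P] (f : α → ℂ) :
    ∑ x ∈ s, (if P then f x else 0) = if P then ∑ x ∈ s, f x else 0 := by
  split_ifs <;> simp

lemma quadA (φ : Fin k → Fin k → Fin k → Fin k → ℂ) :
    ∑ p : Fin k, ∑ q : Fin k, ∑ r : Fin k, ∑ s : Fin k,
        (if p = q ∧ r = s then φ p q r s else 0)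
      = ∑ p : Fin k, ∑ r : Fin k, φ p p r r := by
  refine Finset.sum_congr rfl fun p _ => ?_
  have h1 : ∀ q r : Fin k, ∑ s : Fin k, (if p = q ∧ r = s then φ p q r s else 0)
      = if p = q then φ p q r r else 0 := by
    intro q r
    have : ∀ s, (if p = q ∧ r = s then φ p q r s else 0)
        = if r = s then (if p = q then φ p q r s else 0) else 0 := by
      intro s; by_cases h1 : p = q <;> by_cases h2 : r = s <;> simp [h1, h2]
    simp_rw [this]
    rw [Finset.sum_ite_eq]
    simp
  simp_rw [h1, sum_if_pull]
  rw [Finset.sum_ite_eq]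
  simp

lemma quadB (φ : Fin k → Fin k → Fin k → Fin k → ℂ) :
    ∑ p : Fin k, ∑ q : Fin k, ∑ r : Fin k, ∑ s : Fin k,
        (if p = s ∧ r = q then φ p q r s else 0)
      = ∑ p : Fin k, ∑ q : Fin k, φ p q q p := by
  refine Finset.sum_congr rfl fun p _ => Finset.sum_congr rfl fun q _ => ?_
  have h1 : ∀ r : Fin k, ∑ s : Fin k, (if p = s ∧ r = q then φ p q r s else 0)
      = if r = q then φ p q r p else 0 := by
    intro r
    have : ∀ s, (if p = s ∧ r = q then φ p q r s else 0)
        = if p = s then (if r = q then φ p q r s else 0) else 0 := by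
      intro s; by_cases h1 : p = s <;> by_cases h2 : r = q <;> simp [h1, h2]
    simp_rw [this]
    rw [Finset.sum_ite_eq]
    simp
  simp_rw [h1]
  rw [Finset.sum_ite_eq']
  simp

lemma quadC (φ : Fin k → Fin k → Fin k → Fin k → ℂ) :
    ∑ p : Fin k, ∑ q : Fin k, ∑ r : Fin k, ∑ s : Fin k,
        (if (p = q ∧ r = s) ∧ p = s ∧ r = q then φ p q r s else 0)
      = ∑ p : Fin k, φ p p p p := by
  refine Finset.sum_congr rfl fun p _ => ?_
  have h1 : ∀ q r : Fin k, ∑ s : Fin k, (if (p = q ∧ r = s) ∧ p = s ∧ r = q then φ p q r s else 0)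
      = if q = r then (if p = q then φ p q r r else 0) else 0 := by
    intro q r
    have : ∀ s, (if (p = q ∧ r = s) ∧ p = s ∧ r = q then φ p q r s else 0)
        = if r = s then (if q = r then (if p = q then φ p q r s else 0) else 0) else 0 := by
      intro s
      have hiff : ((p = q ∧ r = s) ∧ p = s ∧ r = q) ↔ (r = s ∧ q = r ∧ p = q) := by
        simp only [Fin.ext_iff]; omega
      simp only [hiff, ite_and]
    simp_rw [this]
    rw [Finset.sum_ite_eq]
    simp
  simp_rw [h1]
  have h2 : ∀ q : Fin k, ∑ r : Fin k, (if q = r then (if p = q then φ p q r r else 0) else 0)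
      = if p = q then φ p q q q else 0 := by
    intro q
    rw [Finset.sum_ite_eq]
    simp
  simp_rw [h2]
  rw [Finset.sum_ite_eq]
  simp

lemma quad_split (C : ℂ) (φ : Fin k → Fin k → Fin k → Fin k → ℂ) :
    ∑ p : Fin k, ∑ q : Fin k, ∑ r : Fin k, ∑ s : Fin k,
        (if (p = q ∧ r = s) ∨ (p = s ∧ r = q) then C else 0) * φ p q r s
      = C * ((∑ p : Fin k, ∑ r : Fin k, φ p p r r)
          + (∑ p : Fin k, ∑ q : Fin k, φ p q q p) - ∑ p : Fin k, φ p p p p) := by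
  have split : ∀ p q r s : Fin k,
      (if (p = q ∧ r = s) ∨ (p = s ∧ r = q) then C else 0) * φ p q r s
        = (if p = q ∧ r = s then C * φ p q r s else 0)
          + (if p = s ∧ r = q then C * φ p q r s else 0)
          - (if (p = q ∧ r = s) ∧ p = s ∧ r = q then C * φ p q r s else 0) := by
    intro p q r s
    by_cases h1 : p = q ∧ r = s <;> by_cases h2 : p = s ∧ r = q <;>
      simp [h1, h2]
  simp_rw [split, Finset.sum_sub_distrib, Finset.sum_add_distrib]
  rw [quadA (fun p q r s => C * φ p q r s), quadB (fun p q r s => C * φ p q r s),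
    quadC (fun p q r s => C * φ p q r s)]
  rw [mul_sub, mul_add, Finset.mul_sum, Finset.mul_sum, Finset.mul_sum]
  simp_rw [Finset.mul_sum]

end Char

/-- Let `R` be a Kähler-type curvature tensor on a complex inner product
space `V` and `a, b, c ∈ ℝ`.  Let `Σ ⊆ V` be a `k`-dimensional complex subspace with unitary
basis `v = {e₁,…,e_k}`.  If the mixed curvature of the restriction to `Σ`, namely
`C_{a,b}(Z) = a·Ric_Σ(Z,Z̄) + b·H(Z)` with `Ric_Σ(Z,Z̄) = ∑ᵢ R(Z,Z̄,vᵢ,v̄ᵢ)` and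
`H(Z) = R(Z,Z̄,Z,Z̄)`, satisfies `C_{a,b}(Z) ≥ c` for all unit vectors `Z ∈ Σ`, then
`(a/k + 2b/(k(k+1))) · S_Σ ≥ c`, where `S_Σ = ∑_{i,j=1}^k R(eᵢ,ēᵢ,eⱼ,ēⱼ)`. -/
theorem stmt_3 {V : Type*} [NormedAddCommGroup V] [InnerProductSpace ℂ V]
    [FiniteDimensional ℂ V]
    (R : V → V → V → V → ℂ) (hR : IsKahlerCurvature R)
    (a b c : ℝ) (k : ℕ) (hk : 1 ≤ k)
    (v : Fin k → V) (hv : Orthonormal ℂ v)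
    (hmixed : ∀ z : Fin k → ℂ, ‖∑ l, z l • v l‖ = 1 →
      c ≤ a * ∑ i : Fin k, (R (∑ l, z l • v l) (∑ l, z l • v l) (v i) (v i)).re +
            b * (R (∑ l, z l • v l) (∑ l, z l • v l) (∑ l, z l • v l) (∑ l, z l • v l)).re) :
    c ≤ (a / (k : ℝ) + 2 * b / ((k : ℝ) * ((k : ℝ) + 1))) *
          ∑ i : Fin k, ∑ j : Fin k, (R (v i) (v i) (v j) (v j)).re := by
  classical
  have hK0 : (0:ℝ) < (k:ℝ) := by
    have : 0 < k := hk
    exact_mod_cast this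
  set S : ℝ := ∑ i : Fin k, ∑ j : Fin k, (R (v i) (v i) (v j) (v j)).re with hSdef
  set T : ℝ := ∑ i : Fin k, (R (v i) (v i) (v i) (v i)).re with hTdef
  -- single-vector inequalities
  have hsingle : ∀ i : Fin k,
      c ≤ a * ∑ j : Fin k, (R (v i) (v i) (v j) (v j)).re
          + b * (R (v i) (v i) (v i) (v i)).re := by
    intro i
    have hz : (∑ l : Fin k, (if l = i then (1:ℂ) else 0) • v l) = v i := by
      simp [ite_smul]
    have hnorm : ‖∑ l : Fin k, (if l = i then (1:ℂ) else 0) • v l‖ = 1 := by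
      rw [hz]; exact hv.1 i
    have h := hmixed _ hnorm
    rwa [hz] at h
  have h2 : (k:ℝ) * c ≤ a * S + b * T := by
    have h := Finset.sum_le_sum (fun i (_ : i ∈ (univ : Finset (Fin k))) => hsingle i)
    rw [Finset.sum_const, card_univ, Fintype.card_fin, nsmul_eq_mul,
      Finset.sum_add_distrib, ← Finset.mul_sum, ← Finset.mul_sum] at h
    exact h
  -- the 4^k phase vectors
  set sq : ℝ := Real.sqrt (k:ℝ) with hsqdef
  have hsq : sq * sq = (k:ℝ) := Real.mul_self_sqrt hK0.le
  set zf : (Fin k → Fin 4) → Fin k → ℂ := fun σ l => ((sq⁻¹ : ℝ) : ℂ) * uphase (σ l) with hzf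
  have hconj : ∀ (σ : Fin k → Fin 4) (l : Fin k),
      starRingEnd ℂ (zf σ l) = ((sq⁻¹ : ℝ) : ℂ) * starRingEnd ℂ (uphase (σ l)) := by
    intro σ l
    simp [hzf, map_mul, Complex.conj_ofReal]
  have hcoef : ((sq⁻¹ : ℝ) : ℂ) * ((sq⁻¹ : ℝ) : ℂ) = ((((k:ℝ))⁻¹ : ℝ) : ℂ) := by
    rw [← Complex.ofReal_mul, ← mul_inv, hsq]
  have hnormσ : ∀ σ : Fin k → Fin 4, ‖∑ l, zf σ l • v l‖ = 1 := by
    intro σ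
    have hxx : (inner ℂ (∑ l, zf σ l • v l) (∑ l, zf σ l • v l) : ℂ) = 1 := by
      rw [hv.inner_sum]
      have hterm : ∀ l : Fin k,
          starRingEnd ℂ (zf σ l) * zf σ l = ((((k:ℝ))⁻¹ : ℝ) : ℂ) := by
        intro l
        rw [hconj]
        simp only [hzf]
        calc ((sq⁻¹:ℝ):ℂ) * starRingEnd ℂ (uphase (σ l)) * (((sq⁻¹:ℝ):ℂ) * uphase (σ l))
            = ((sq⁻¹:ℝ):ℂ) * ((sq⁻¹:ℝ):ℂ)
                * (uphase (σ l) * starRingEnd ℂ (uphase (σ l))) := by ring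
          _ = ((((k:ℝ))⁻¹ : ℝ) : ℂ) := by rw [hcoef, uphase_mul_conj, mul_one]
      simp_rw [hterm]
      rw [Finset.sum_const, card_univ, Fintype.card_fin, nsmul_eq_mul]
      rw [show ((k:ℕ):ℂ) = (((k:ℝ):ℝ):ℂ) from by push_cast; ring,
        ← Complex.ofReal_mul, mul_inv_cancel₀ hK0.ne', Complex.ofReal_one]
    have hsq2 : ‖∑ l, zf σ l • v l‖^2 = 1 := by
      rw [@norm_sq_eq_re_inner ℂ, hxx]
      simp
    calc ‖∑ l, zf σ l • v l‖
        = Real.sqrt (‖∑ l, zf σ l • v l‖^2) := (Real.sqrt_sq (norm_nonneg _)).symm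
      _ = 1 := by rw [hsq2, Real.sqrt_one]
  -- moment constants
  set c2 : ℝ := ((k:ℝ))⁻¹ * 4^k with hc2
  set c4 : ℝ := ((k:ℝ))⁻¹ * ((k:ℝ))⁻¹ * 4^k with hc4
  have hc2C : ((((k:ℝ))⁻¹ : ℝ) : ℂ) * (4:ℂ)^k = ((c2:ℝ):ℂ) := by
    rw [hc2]; push_cast; ring
  have hc4C : ((((k:ℝ))⁻¹ : ℝ) : ℂ) * ((((k:ℝ))⁻¹ : ℝ) : ℂ) * (4:ℂ)^k = ((c4:ℝ):ℂ) := by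
    rw [hc4]; push_cast; ring
  -- second moments
  have key2σ : ∀ p q : Fin k,
      ∑ σ : Fin k → Fin 4, zf σ p * starRingEnd ℂ (zf σ q)
        = if p = q then ((c2:ℝ):ℂ) else 0 := by
    intro p q
    have hterm : ∀ σ : Fin k → Fin 4, zf σ p * starRingEnd ℂ (zf σ q)
        = ((((k:ℝ))⁻¹:ℝ):ℂ) * (uphase (σ p) * starRingEnd ℂ (uphase (σ q))) := by
      intro σ
      rw [hconj]
      simp only [hzf]
      calc ((sq⁻¹:ℝ):ℂ) * uphase (σ p) * (((sq⁻¹:ℝ):ℂ) * starRingEnd ℂ (uphase (σ q)))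
          = ((sq⁻¹:ℝ):ℂ) * ((sq⁻¹:ℝ):ℂ)
              * (uphase (σ p) * starRingEnd ℂ (uphase (σ q))) := by ring
        _ = _ := by rw [hcoef]
    simp_rw [hterm]
    rw [← Finset.mul_sum, charSum2 hk p q, mul_ite, mul_zero, hc2C]
  -- fourth moments
  have key4σ : ∀ p q r s : Fin k,
      ∑ σ : Fin k → Fin 4,
          zf σ p * starRingEnd ℂ (zf σ q) * zf σ r * starRingEnd ℂ (zf σ s)
        = if (p = q ∧ r = s) ∨ (p = s ∧ r = q) then ((c4:ℝ):ℂ) else 0 := by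
    intro p q r s
    have hterm : ∀ σ : Fin k → Fin 4,
        zf σ p * starRingEnd ℂ (zf σ q) * zf σ r * starRingEnd ℂ (zf σ s)
          = ((((k:ℝ))⁻¹:ℝ):ℂ) * ((((k:ℝ))⁻¹:ℝ):ℂ)
              * (uphase (σ p) * starRingEnd ℂ (uphase (σ q)) * uphase (σ r)
                  * starRingEnd ℂ (uphase (σ s))) := by
      intro σ
      rw [hconj, hconj]
      simp only [hzf]
      calc ((sq⁻¹:ℝ):ℂ) * uphase (σ p) * (((sq⁻¹:ℝ):ℂ) * starRingEnd ℂ (uphase (σ q)))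
            * (((sq⁻¹:ℝ):ℂ) * uphase (σ r)) * (((sq⁻¹:ℝ):ℂ) * starRingEnd ℂ (uphase (σ s)))
          = (((sq⁻¹:ℝ):ℂ) * ((sq⁻¹:ℝ):ℂ)) * (((sq⁻¹:ℝ):ℂ) * ((sq⁻¹:ℝ):ℂ))
              * (uphase (σ p) * starRingEnd ℂ (uphase (σ q)) * uphase (σ r)
                  * starRingEnd ℂ (uphase (σ s))) := by ring
        _ = _ := by rw [hcoef]
    simp_rw [hterm]
    rw [← Finset.mul_sum, charSum4 p q r s, mul_ite, mul_zero, hc4C]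
  -- averaged Ricci term
  have ricσ : ∀ i : Fin k,
      ∑ σ : Fin k → Fin 4, R (∑ l, zf σ l • v l) (∑ l, zf σ l • v l) (v i) (v i)
        = ((c2:ℝ):ℂ) * ∑ p : Fin k, R (v p) (v p) (v i) (v i) := by
    intro i
    calc ∑ σ : Fin k → Fin 4, R (∑ l, zf σ l • v l) (∑ l, zf σ l • v l) (v i) (v i)
        = ∑ σ : Fin k → Fin 4, ∑ p, ∑ q,
            zf σ p * starRingEnd ℂ (zf σ q) * R (v p) (v q) (v i) (v i) :=
          Finset.sum_congr rfl fun σ _ => kc_expand2 hR (zf σ) v (v i) (v i)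
      _ = ∑ p, ∑ q, ∑ σ : Fin k → Fin 4,
            zf σ p * starRingEnd ℂ (zf σ q) * R (v p) (v q) (v i) (v i) := by
          rw [Finset.sum_comm]
          exact Finset.sum_congr rfl fun p _ => Finset.sum_comm
      _ = ∑ p, ∑ q, (if p = q then ((c2:ℝ):ℂ) else 0) * R (v p) (v q) (v i) (v i) := by
          refine Finset.sum_congr rfl fun p _ => Finset.sum_congr rfl fun q _ => ?_
          rw [← Finset.sum_mul, key2σ]
      _ = ∑ p, ((c2:ℝ):ℂ) * R (v p) (v p) (v i) (v i) := by
          refine Finset.sum_congr rfl fun p _ => ?_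
          simp_rw [ite_mul, zero_mul]
          rw [Finset.sum_ite_eq]
          simp
      _ = ((c2:ℝ):ℂ) * ∑ p, R (v p) (v p) (v i) (v i) := by rw [Finset.mul_sum]
  -- averaged holomorphic sectional term
  have swap4 : ∀ (f : (Fin k → Fin 4) → Fin k → Fin k → Fin k → Fin k → ℂ),
      ∑ σ : Fin k → Fin 4, ∑ p, ∑ q, ∑ r, ∑ s, f σ p q r s
        = ∑ p, ∑ q, ∑ r, ∑ s, ∑ σ : Fin k → Fin 4, f σ p q r s := by
    intro f
    rw [Finset.sum_comm]
    refine Finset.sum_congr rfl fun p _ => ?_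
    rw [Finset.sum_comm]
    refine Finset.sum_congr rfl fun q _ => ?_
    rw [Finset.sum_comm]
    refine Finset.sum_congr rfl fun r _ => ?_
    exact Finset.sum_comm
  have hHσ : ∑ σ : Fin k → Fin 4,
      R (∑ l, zf σ l • v l) (∑ l, zf σ l • v l) (∑ l, zf σ l • v l) (∑ l, zf σ l • v l)
      = ((c4:ℝ):ℂ) * ((∑ p : Fin k, ∑ r : Fin k, R (v p) (v p) (v r) (v r))
          + (∑ p : Fin k, ∑ r : Fin k, R (v p) (v p) (v r) (v r))
          - ∑ p : Fin k, R (v p) (v p) (v p) (v p)) := by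
    calc ∑ σ : Fin k → Fin 4,
        R (∑ l, zf σ l • v l) (∑ l, zf σ l • v l) (∑ l, zf σ l • v l) (∑ l, zf σ l • v l)
        = ∑ σ : Fin k → Fin 4, ∑ p, ∑ q, ∑ r, ∑ s,
            zf σ p * starRingEnd ℂ (zf σ q) * zf σ r * starRingEnd ℂ (zf σ s)
              * R (v p) (v q) (v r) (v s) :=
          Finset.sum_congr rfl fun σ _ => kc_expand4 hR (zf σ) v
      _ = ∑ p, ∑ q, ∑ r, ∑ s, ∑ σ : Fin k → Fin 4,
            zf σ p * starRingEnd ℂ (zf σ q) * zf σ r * starRingEnd ℂ (zf σ s)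
              * R (v p) (v q) (v r) (v s) := swap4 _
      _ = ∑ p, ∑ q, ∑ r, ∑ s,
            (if (p = q ∧ r = s) ∨ (p = s ∧ r = q) then ((c4:ℝ):ℂ) else 0)
              * R (v p) (v q) (v r) (v s) := by
          refine Finset.sum_congr rfl fun p _ => Finset.sum_congr rfl fun q _ =>
            Finset.sum_congr rfl fun r _ => Finset.sum_congr rfl fun s _ => ?_
          rw [← Finset.sum_mul, key4σ]
      _ = ((c4:ℝ):ℂ) * ((∑ p, ∑ r, R (v p) (v p) (v r) (v r))
            + (∑ p, ∑ q, R (v p) (v q) (v q) (v p)) - ∑ p, R (v p) (v p) (v p) (v p)) :=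
          quad_split _ _
      _ = _ := by
          have hsym : ∀ p q : Fin k, R (v p) (v q) (v q) (v p) = R (v q) (v q) (v p) (v p) :=
            fun p q => hR.symm_fst_trd (v p) (v q) (v q) (v p)
          have hswap : (∑ p : Fin k, ∑ q : Fin k, R (v p) (v q) (v q) (v p))
              = ∑ p : Fin k, ∑ r : Fin k, R (v p) (v p) (v r) (v r) := by
            calc (∑ p : Fin k, ∑ q : Fin k, R (v p) (v q) (v q) (v p))
                = ∑ p : Fin k, ∑ q : Fin k, R (v q) (v q) (v p) (v p) :=
                  Finset.sum_congr rfl fun p _ => Finset.sum_congr rfl fun q _ => hsym p q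
              _ = _ := Finset.sum_comm
          rw [hswap]
  -- real parts of the averages
  have hXre : (∑ p : Fin k, ∑ r : Fin k, R (v p) (v p) (v r) (v r)).re = S := by
    rw [Complex.re_sum, hSdef]
    exact Finset.sum_congr rfl fun p _ => Complex.re_sum _ _
  have hTre : (∑ p : Fin k, R (v p) (v p) (v p) (v p)).re = T := by
    rw [Complex.re_sum, hTdef]
  have hAσ : ∑ σ : Fin k → Fin 4,
      ∑ i : Fin k, (R (∑ l, zf σ l • v l) (∑ l, zf σ l • v l) (v i) (v i)).re
      = c2 * S := by
    rw [Finset.sum_comm]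
    calc ∑ i : Fin k, ∑ σ : Fin k → Fin 4,
          (R (∑ l, zf σ l • v l) (∑ l, zf σ l • v l) (v i) (v i)).re
        = ∑ i : Fin k, (∑ σ : Fin k → Fin 4,
            R (∑ l, zf σ l • v l) (∑ l, zf σ l • v l) (v i) (v i)).re :=
          Finset.sum_congr rfl fun i _ => (Complex.re_sum _ _).symm
      _ = ∑ i : Fin k, (((c2:ℝ):ℂ) * ∑ p, R (v p) (v p) (v i) (v i)).re :=
          Finset.sum_congr rfl fun i _ => by rw [ricσ i]
      _ = ∑ i : Fin k, c2 * ∑ p, (R (v p) (v p) (v i) (v i)).re := by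
          refine Finset.sum_congr rfl fun i _ => ?_
          rw [Complex.re_ofReal_mul, Complex.re_sum]
      _ = c2 * ∑ i : Fin k, ∑ p, (R (v p) (v p) (v i) (v i)).re := by rw [Finset.mul_sum]
      _ = c2 * S := by
          congr 1
          rw [hSdef]
          exact Finset.sum_comm
  have hBσ : ∑ σ : Fin k → Fin 4,
      (R (∑ l, zf σ l • v l) (∑ l, zf σ l • v l) (∑ l, zf σ l • v l) (∑ l, zf σ l • v l)).re
      = c4 * (S + S - T) := by
    rw [← Complex.re_sum, hHσ, Complex.re_ofReal_mul, Complex.sub_re, Complex.add_re,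
      hXre, hTre]
  -- total over the 4^k phase vectors
  have hσtotal : ((4:ℝ)^k) * c ≤ a * (c2 * S) + b * (c4 * (S + S - T)) := by
    have h := Finset.sum_le_sum
      (fun σ (_ : σ ∈ (univ : Finset (Fin k → Fin 4))) => hmixed (zf σ) (hnormσ σ))
    rw [Finset.sum_const, card_univ, nsmul_eq_mul,
      show Fintype.card (Fin k → Fin 4) = 4^k from by
        simp [Fintype.card_fun]] at h
    push_cast at h
    rw [Finset.sum_add_distrib, ← Finset.mul_sum, ← Finset.mul_sum, hAσ, hBσ] at h
    exact h
  have h4pos : (0:ℝ) < 4^k := by positivity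
  have hKne : (k:ℝ) ≠ 0 := hK0.ne'
  have hRHS : a * (c2 * S) + b * (c4 * (S + S - T))
      = (4:ℝ)^k * (a * (S / (k:ℝ)) + b * ((S + S - T) / ((k:ℝ)*(k:ℝ)))) := by
    rw [hc2, hc4]
    field_simp
  have h1 : c ≤ a * (S / (k:ℝ)) + b * ((S + S - T) / ((k:ℝ)*(k:ℝ))) := by
    rw [hRHS] at hσtotal
    exact le_of_mul_le_mul_left hσtotal h4pos
  -- combine the two averaged inequalities
  have hK1ne : (k:ℝ) + 1 ≠ 0 := by positivity
  have hw1 : (0:ℝ) ≤ (k:ℝ)/((k:ℝ)+1) := by positivity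
  have hw2 : (0:ℝ) ≤ 1/((k:ℝ)*((k:ℝ)+1)) := by positivity
  have comb := add_le_add (mul_le_mul_of_nonneg_left h1 hw1) (mul_le_mul_of_nonneg_left h2 hw2)
  have hL : (k:ℝ)/((k:ℝ)+1) * c + 1/((k:ℝ)*((k:ℝ)+1)) * ((k:ℝ) * c) = c := by
    field_simp
  have hRr : (k:ℝ)/((k:ℝ)+1) * (a * (S/(k:ℝ)) + b * ((S+S-T)/((k:ℝ)*(k:ℝ))))
      + 1/((k:ℝ)*((k:ℝ)+1)) * (a * S + b * T)
      = (a / (k:ℝ) + 2*b/((k:ℝ)*((k:ℝ)+1))) * S := by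
    field_simp
    ring
  rw [hL, hRr] at comb
  exact comb
end

section
/- Let (M,g) be a Kähler manifold of complex dimension n ≥ 2, let 1 ≤ k ≤ n, and suppose the k-Ricci curvature satisfies Ric_k(X,X̄) ≥ (k+1)σ|X|² for all (1,0)-vectors X and all k-dimensional subspaces containing X. Then for every (1,0)-tangent vector X: (k-1)|X|²·Ric(X,X̄) + (n-k)·R(X,X̄,X,X̄) ≥ (n-1)(k+1)σ|X|⁴. -/
open scoped ComplexConjugate InnerProductSpace
open Module Submodule

section InnerProductSpace

variable {𝕜 E : Type*} [RCLike 𝕜] [NormedAddCommGroup E] [InnerProductSpace 𝕜 E]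

theorem OrthonormalBasis.sesqForm_apply_self_eq_sum {ι : Type*} [Fintype ι]
    (B : E →ₗ⋆[𝕜] E →ₗ[𝕜] 𝕜) (b : OrthonormalBasis ι 𝕜 E) (x : E) :
    B x x = ∑ i, ∑ i', ⟪b i, x⟫_𝕜 * ⟪x, b i'⟫_𝕜 * B (b i') (b i) := by
  conv_lhs => rw [← b.sum_repr' x]
  simp only [map_sum, map_smulₛₗ, LinearMap.sum_apply, LinearMap.smul_apply, smul_eq_mul,
    RingHom.id_apply, inner_conj_symm, Finset.mul_sum, mul_assoc]

theorem OrthonormalBasis.sum_sesqForm_apply_self_eq {ι κ : Type*} [Fintype ι] [Fintype κ]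
    (B : E →ₗ⋆[𝕜] E →ₗ[𝕜] 𝕜) (b : OrthonormalBasis ι 𝕜 E) (b' : OrthonormalBasis κ 𝕜 E) :
    ∑ j, B (b' j) (b' j) = ∑ i, B (b i) (b i) := by
  classical
  calc ∑ j, B (b' j) (b' j)
      = ∑ i, ∑ i', (∑ j, ⟪b i, b' j⟫_𝕜 * ⟪b' j, b i'⟫_𝕜) * B (b i') (b i) := by
        simp_rw [b.sesqForm_apply_self_eq_sum B, Finset.sum_mul]
        rw [Finset.sum_comm]
        exact Finset.sum_congr rfl fun i _ => Finset.sum_comm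
    _ = ∑ i, B (b i) (b i) := by
        simp [b'.sum_inner_mul_inner, b.inner_eq_ite]

theorem exists_norm_eq_one_smul_eq [Nontrivial E] (x : E) :
    ∃ u : E, ‖u‖ = 1 ∧ x = (‖x‖ : 𝕜) • u := by
  rcases eq_or_ne x 0 with rfl | hx
  · obtain ⟨y, hy⟩ := exists_ne (0 : E)
    exact ⟨_, norm_smul_inv_norm (𝕜 := 𝕜) hy, by simp⟩
  · refine ⟨(‖x‖⁻¹ : 𝕜) • x, norm_smul_inv_norm hx, ?_⟩
    rw [smul_smul, mul_inv_cancel₀ (by simpa using hx), one_smul]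

theorem exists_orthonormalBasis_apply_zero_eq [FiniteDimensional 𝕜 E] {n : ℕ}
    (hn : finrank 𝕜 E = n + 1) {u : E} (hu : ‖u‖ = 1) :
    ∃ b : OrthonormalBasis (Fin (n + 1)) 𝕜 E, b 0 = u := by
  have hu' : Orthonormal 𝕜 (({0} : Set (Fin (n + 1))).domRestrict fun _ => u) := by
    rw [orthonormal_iff_ite]
    rintro ⟨i, rfl⟩ ⟨j, rfl⟩
    simp [Set.domRestrict, inner_self_eq_norm_sq_to_K, hu]
  obtain ⟨b, hb⟩ := hu'.exists_orthonormalBasis_extension_of_card_eq (by simpa using hn)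
  exact ⟨b, hb 0 rfl⟩

theorem le_sum_of_forall_orthonormalBasis_submodule {k : ℕ} (F : E → E → ℝ) (c : E → ℝ)
    (hF : ∀ (x : E) (W : Submodule 𝕜 E), finrank 𝕜 W = k → x ∈ W →
      ∀ v : OrthonormalBasis (Fin k) 𝕜 W, c x ≤ ∑ i, F x (v i))
    {g : Fin k → E} (hg : Orthonormal 𝕜 g) {x : E} (hx : x ∈ span 𝕜 (Set.range g)) :
    c x ≤ ∑ i, F x (g i) := by
  let v := (Basis.span hg.linearIndependent).toOrthonormalBasis
    (by rw [funext (Basis.span_apply hg.linearIndependent)]; exact orthonormal_span hg)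
  have hv : ∀ i, (v i : E) = g i := by simp [v, Basis.span_apply]
  simpa [hv] using hF x _ (by simpa using finrank_span_eq_card hg.linearIndependent) hx v

end InnerProductSpace

def cyclicFrame {m l : ℕ} (h : l ≤ m) (j : Fin m) : Fin (l + 1) → Fin (m + 1) :=
  Fin.cons 0 fun t => (j + Fin.castLE h t).succ

theorem cyclicFrame_injective {m l : ℕ} (h : l ≤ m) (j : Fin m) :
    Function.Injective (cyclicFrame h j) := by
  have : NeZero m := NeZero.of_pos j.pos
  refine Fin.cons_injective_iff.mpr ⟨fun ⟨t, ht⟩ => Fin.succ_ne_zero _ ht, ?_⟩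
  exact (Fin.succ_injective _).comp ((add_right_injective j).comp (Fin.castLE_injective h))

theorem sum_sum_cyclicFrame {M : Type*} [AddCommMonoid M] {m l : ℕ} (h : l ≤ m)
    (a : Fin (m + 1) → M) :
    ∑ j : Fin m, ∑ i, a (cyclicFrame h j i) = m • a 0 + l • ∑ j : Fin m, a j.succ := by
  have hrow : ∀ t : Fin l, ∑ j : Fin m, a (j + Fin.castLE h t).succ = ∑ j : Fin m, a j.succ :=
    fun t =>
      haveI : NeZero m := NeZero.of_pos (Fin.castLE h t).pos
      Fintype.sum_equiv (Equiv.addRight (Fin.castLE h t)) _ _ fun _ => rfl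
  simp only [cyclicFrame, Fin.sum_univ_succ, Fin.cons_zero, Fin.cons_succ, Finset.sum_add_distrib]
  rw [Finset.sum_comm]
  simp [hrow]

namespace IsKahlerCurvature

variable {V : Type*} [AddCommGroup V] [Module ℂ V] {R : V → V → V → V → ℂ}

theorem map_add_trd (hR : IsKahlerCurvature R) (X Y Z₁ Z₂ W : V) :
    R X Y (Z₁ + Z₂) W = R X Y Z₁ W + R X Y Z₂ W := by
  rw [hR.symm_fst_trd X, (hR.linear_fst Y X W).map_add, hR.symm_fst_trd Z₁, hR.symm_fst_trd Z₂]

theorem map_smul_trd (hR : IsKahlerCurvature R) (X Y Z W : V) (c : ℂ) :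
    R X Y (c • Z) W = c * R X Y Z W := by
  rw [hR.symm_fst_trd X, (hR.linear_fst Y X W).map_smul, hR.symm_fst_trd Z, smul_eq_mul]

theorem map_add_snd (hR : IsKahlerCurvature R) (X Y₁ Y₂ Z W : V) :
    R X (Y₁ + Y₂) Z W = R X Y₁ Z W + R X Y₂ Z W := by
  simpa using hR.conjLinear_snd X Z W 1 Y₁ Y₂

theorem map_smul_snd (hR : IsKahlerCurvature R) (X Y Z W : V) (c : ℂ) :
    R X (c • Y) Z W = conj c * R X Y Z W := by
  have h0 : R X 0 Z W = 0 := by simpa using hR.map_add_snd X 0 0 Z W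
  simpa [h0] using hR.conjLinear_snd X Z W c Y 0

theorem map_add_fourth (hR : IsKahlerCurvature R) (X Y Z W₁ W₂ : V) :
    R X Y Z (W₁ + W₂) = R X Y Z W₁ + R X Y Z W₂ := by
  simp only [hR.symm_snd_fourth X Y, hR.map_add_snd]

theorem map_smul_fourth (hR : IsKahlerCurvature R) (X Y Z W : V) (c : ℂ) :
    R X Y Z (c • W) = conj c * R X Y Z W := by
  simp only [hR.symm_snd_fourth X Y, hR.map_smul_snd]

-- Mathlib's sesquilinear forms are conjugate-linear in the first argument, hence the swap.
def sesqForm (hR : IsKahlerCurvature R) (X : V) : V →ₗ⋆[ℂ] V →ₗ[ℂ] ℂ :=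
  LinearMap.mk₂'ₛₗ _ _ (fun W Z => R X X Z W) (fun _ _ _ => hR.map_add_fourth ..)
    (fun _ _ _ => hR.map_smul_fourth ..) (fun _ _ _ => hR.map_add_trd ..)
    (fun _ _ _ => hR.map_smul_trd ..)

end IsKahlerCurvature

theorem stmt_4_general {V : Type*} [NormedAddCommGroup V] [InnerProductSpace ℂ V]
    [FiniteDimensional ℂ V]
    (n k : ℕ) (hk1 : 1 ≤ k) (hkn : k ≤ n)
    (hrank : Module.finrank ℂ V = n)
    (R : V → V → V → V → ℂ) (hR : IsKahlerCurvature R) (σ : ℝ)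
    (e : OrthonormalBasis (Fin n) ℂ V)
    (hkRic : ∀ (X : V) (W : Submodule ℂ V), Module.finrank ℂ W = k → X ∈ W →
      ∀ v : OrthonormalBasis (Fin k) ℂ W,
        ((k : ℝ) + 1) * σ * ‖X‖ ^ 2 ≤ ∑ i : Fin k, (R X X (v i : V) (v i : V)).re) :
    ∀ X : V,
      ((n : ℝ) - 1) * ((k : ℝ) + 1) * σ * ‖X‖ ^ 4 ≤
        ((k : ℝ) - 1) * ‖X‖ ^ 2 * (∑ j : Fin n, (R X X (e j) (e j)).re) +
          ((n : ℝ) - (k : ℝ)) * (R X X X X).re := by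
  intro X
  obtain ⟨l, rfl⟩ := Nat.exists_eq_add_of_le' hk1
  obtain ⟨m, rfl⟩ := Nat.exists_eq_add_of_le' (hk1.trans hkn)
  have hl : l ≤ m := by omega
  have : Nontrivial V := finrank_pos_iff (R := ℂ) |>.mp (by omega)
  obtain ⟨u, hu, hXu⟩ := exists_norm_eq_one_smul_eq (𝕜 := ℂ) X
  obtain ⟨f, hf0⟩ := exists_orthonormalBasis_apply_zero_eq hrank hu
  set a : Fin (m + 1) → ℝ := fun i => (R X X (f i) (f i)).re
  have hframe : ∀ j, ((↑(l + 1) : ℝ) + 1) * σ * ‖X‖ ^ 2 ≤ ∑ i, a (cyclicFrame hl j i) := by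
    intro j
    refine le_sum_of_forall_orthonormalBasis_submodule (fun Y Z => (R Y Y Z Z).re) _ hkRic
      (f.orthonormal.comp _ (cyclicFrame_injective hl j)) ?_
    rw [hXu]
    refine smul_mem _ _ (subset_span ⟨0, ?_⟩)
    simp [cyclicFrame, hf0]
  have hsum := Finset.sum_le_sum fun j (_ : j ∈ Finset.univ) => hframe j
  rw [sum_sum_cyclicFrame] at hsum
  have htrace : ∑ j, R X X (e j) (e j) = ∑ j, R X X (f j) (f j) :=
    f.sum_sesqForm_apply_self_eq (hR.sesqForm X) e
  have hRic : ∑ j, (R X X (e j) (e j)).re = a 0 + ∑ j : Fin m, a j.succ := by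
    rw [← Complex.re_sum, htrace, Complex.re_sum, Fin.sum_univ_succ]
  have hscale : (R X X X X).re = ‖X‖ ^ 2 * a 0 := by
    have : R X X X X = ((‖X‖ : ℂ) * conj (‖X‖ : ℂ)) * R X X u u := by
      rw [mul_assoc, ← hR.map_smul_fourth, ← hR.map_smul_trd]
      exact congrArg₂ (R X X) hXu hXu
    simp [this, a, hf0, sq]
  rw [hRic, hscale]
  simp only [Finset.sum_const, Finset.card_univ, Fintype.card_fin, nsmul_eq_mul] at hsum
  push_cast at hsum ⊢
  nlinarith [mul_le_mul_of_nonneg_left hsum (sq_nonneg ‖X‖)]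

/-- **Chu–Lee–Tam, Lemma 2.2; pointwise form.** Let `R` be a Kähler-type
curvature tensor on an `n`-dimensional complex inner product space (`n ≥ 2`), `1 ≤ k ≤ n`,
and suppose the `k`-Ricci curvature satisfies `Ric_k(X,X̄) ≥ (k+1)σ|X|²` for every vector `X`
and every `k`-dimensional complex subspace containing `X` (with any unitary basis `v` of it).
Then for every vector `X`:
`(k-1)|X|²·Ric(X,X̄) + (n-k)·R(X,X̄,X,X̄) ≥ (n-1)(k+1)σ|X|⁴`,
where `Ric(X,X̄) = ∑ⱼ R(X,X̄,eⱼ,ēⱼ)` for a unitary basis `e` of `V`. -/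
theorem stmt_4 {V : Type*} [NormedAddCommGroup V] [InnerProductSpace ℂ V]
    [FiniteDimensional ℂ V]
    (n k : ℕ) (hn : 2 ≤ n) (hk1 : 1 ≤ k) (hkn : k ≤ n)
    (hrank : Module.finrank ℂ V = n)
    (R : V → V → V → V → ℂ) (hR : IsKahlerCurvature R) (σ : ℝ)
    (e : OrthonormalBasis (Fin n) ℂ V)
    (hkRic : ∀ (X : V) (W : Submodule ℂ V), Module.finrank ℂ W = k → X ∈ W →
      ∀ v : OrthonormalBasis (Fin k) ℂ W,
        ((k : ℝ) + 1) * σ * ‖X‖ ^ 2 ≤ ∑ i : Fin k, (R X X (v i : V) (v i : V)).re) :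
    ∀ X : V,
      ((n : ℝ) - 1) * ((k : ℝ) + 1) * σ * ‖X‖ ^ 4 ≤
        ((k : ℝ) - 1) * ‖X‖ ^ 2 * (∑ j : Fin n, (R X X (e j) (e j)).re) +
          ((n : ℝ) - (k : ℝ)) * (R X X X X).re :=
  stmt_4_general n k hk1 hkn hrank R hR σ e hkRic
end
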